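/- arXiv:math/0309129 — 4 statements merged into one kernel-verified Lean document; each statement's English description precedes it below -/
import Mathlib

section
/- Let H be a subgroup of the additive group ℝ^n. Then either H is dense in ℝ^n, or there exists a surjective ℝ-linear map F : ℝ^n → ℝ such that F(H) ⊆ ℤ. -/
open Filter Topology Module Submodule

/-- A closed subgroup containing no line has a separation around 0. -/
lemma sep_of_no_line {E : Type*} [NormedAddCommGroup E] [NormedSpace ℝ E]
    [FiniteDimensional ℝ E] (K : AddSubgroup E) (hc : IsClosed (K : Set E))
    (h : ∀ u : E, u ≠ 0 → ¬ (∀ t : ℝ, t • u ∈ K)) :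
    ∃ ε > (0:ℝ), ∀ x ∈ K, ‖x‖ < ε → x = 0 := by
  by_contra hcon
  push_neg at hcon
  have hseq : ∀ m : ℕ, ∃ x, x ∈ K ∧ ‖x‖ < 1/(m+1) ∧ x ≠ 0 := by
    intro m
    obtain ⟨x, hxK, hxn, hx0⟩ := hcon (1/(m+1)) (by positivity)
    exact ⟨x, hxK, hxn, hx0⟩
  choose x hxK hxn hx0 using hseq
  have hxnorm : ∀ m, ‖x m‖ ≠ 0 := fun m => norm_ne_zero_iff.2 (hx0 m)
  set u : ℕ → E := fun m => ‖x m‖⁻¹ • x m with hu_def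
  have hu : ∀ m, u m ∈ Metric.sphere (0:E) 1 := by
    intro m
    simp [hu_def, norm_smul, inv_mul_cancel₀ (hxnorm m)]
  obtain ⟨u₀, hu₀, φ, hφ, hconv⟩ :=
    (isCompact_sphere (0:E) 1).tendsto_subseq hu
  have hu₀ne : u₀ ≠ 0 := by
    intro h0
    rw [h0] at hu₀
    simp at hu₀
  refine h u₀ hu₀ne ?_
  intro t
  set r : ℕ → ℝ := fun m => ‖x (φ m)‖ with hr_def
  have hr0 : ∀ m, 0 < r m := fun m => (hxnorm (φ m)).lt_of_le' (norm_nonneg _)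
  have hrt : Tendsto r atTop (𝓝 0) := by
    apply squeeze_zero (fun m => (hr0 m).le) (fun m => ?_)
      tendsto_one_div_add_atTop_nhds_zero_nat
    have h1 : r m < 1/(φ m + 1) := hxn (φ m)
    have h2 : (1:ℝ)/(φ m + 1) ≤ 1/(m+1) := by
      apply one_div_le_one_div_of_le (by positivity)
      have hmle : (m:ℝ) + 1 ≤ (φ m : ℝ) + 1 := by
        have : (m:ℝ) ≤ (φ m : ℝ) := Nat.cast_le.mpr hφ.le_apply
        linarith
      exact hmle
    linarith
  have key : Tendsto (fun m => ((⌊t / r m⌋ : ℝ) * r m) • u (φ m)) atTop (𝓝 (t • u₀)) := by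
    refine Tendsto.smul ?_ hconv
    have hd : Tendsto (fun m => (⌊t / r m⌋ : ℝ) * r m - t) atTop (𝓝 0) := by
      apply squeeze_zero_norm (fun m => ?_) hrt
      have : (⌊t / r m⌋ : ℝ) * r m - t = (((⌊t / r m⌋ : ℝ)) - t / r m) * r m := by
        rw [sub_mul, div_mul_cancel₀ _ (hr0 m).ne']
      rw [this, norm_mul, Real.norm_eq_abs, Real.norm_eq_abs, abs_of_pos (hr0 m)]
      have h1 : |(⌊t / r m⌋ : ℝ) - t / r m| ≤ 1 := by
        rw [abs_sub_comm]
        have := Int.fract_nonneg (t / r m)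
        have := Int.fract_lt_one (t / r m)
        rw [Int.self_sub_floor]
        rw [abs_of_nonneg ‹0 ≤ Int.fract (t / r m)›]
        linarith
      nlinarith [ (hr0 m).le ]
    have := hd.add_const t
    simpa using this
  have hmem : ∀ m, ((⌊t / r m⌋ : ℝ) * r m) • u (φ m) ∈ K := by
    intro m
    have : ((⌊t / r m⌋ : ℝ) * r m) • u (φ m) = (⌊t / r m⌋ : ℤ) • x (φ m) := by
      rw [← Int.cast_smul_eq_zsmul ℝ, hu_def]
      simp only [smul_smul]
      congr 1
      have hrr : r m = ‖x (φ m)‖ := rfl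
      rw [mul_assoc, hrr, mul_inv_cancel₀ (hxnorm (φ m)), mul_one]
    rw [this]
    exact AddSubgroup.zsmul_mem K (hxK (φ m)) _
  exact hc.mem_of_tendsto key (Eventually.of_forall hmem)

lemma dense_or_functional_aux (d : ℕ) :
    ∀ (E : Type) [NormedAddCommGroup E] [NormedSpace ℝ E] [FiniteDimensional ℝ E],
      finrank ℝ E = d → ∀ H : AddSubgroup E,
        Dense (H : Set E) ∨ ∃ F : E →ₗ[ℝ] ℝ, F ≠ 0 ∧ ∀ x ∈ H, ∃ m : ℤ, F x = m := by
  induction d using Nat.strong_induction_on with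
  | _ d IH =>
    intro E _ _ _ hrank H
    by_cases hs : Subsingleton E
    · left
      have : (H : Set E) = Set.univ := by
        ext x
        simp only [Set.mem_univ, iff_true, SetLike.mem_coe]
        rw [Subsingleton.elim x (0 : E)]
        exact H.zero_mem
      rw [this]
      exact dense_univ
    have : Nontrivial E := not_subsingleton_iff_nontrivial.mp hs
    set K := H.topologicalClosure with hK_def
    by_cases hline : ∃ u : E, u ≠ 0 ∧ ∀ t : ℝ, t • u ∈ K
    · obtain ⟨u, hu0, hu⟩ := hline
      set V : Submodule ℝ E := Submodule.span ℝ {u} with hV_def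
      haveI : IsClosed (V : Set E) := Submodule.closed_of_finiteDimensional V
      set π := V.mkQ with hπ_def
      set H' := H.map π.toAddMonoidHom with hH'_def
      by_cases hd' : Dense (H' : Set (E ⧸ V))
      · left
        have hopen : IsOpenMap π := Submodule.isOpenMap_mkQ V
        have hdpre : Dense (π ⁻¹' (H' : Set (E ⧸ V))) := hd'.preimage hopen
        have hsub : π ⁻¹' (H' : Set (E ⧸ V)) ⊆ (K : Set E) := by
          intro z hz
          obtain ⟨h, hh, hph⟩ := hz
          have hzv : z - h ∈ V := by
            rw [← Submodule.Quotient.eq]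
            exact hph.symm
          obtain ⟨t, ht⟩ := Submodule.mem_span_singleton.mp hzv
          have hz' : z = h + t • u := by rw [ht]; abel
          rw [hz']
          exact K.add_mem (H.le_topologicalClosure hh) (hu t)
        rw [dense_iff_closure_eq] at hdpre ⊢
        have h1 : closure (π ⁻¹' (H' : Set (E ⧸ V))) ⊆ closure (K : Set E) :=
          closure_mono hsub
        rw [hdpre, H.isClosed_topologicalClosure.closure_eq] at h1
        have : (K : Set E) = Set.univ := Set.univ_subset_iff.mp h1
        have h2 : (K : Set E) = closure (H : Set E) := rfl
        rw [← h2, this]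
      · have hrV : finrank ℝ V = 1 := finrank_span_singleton hu0
        have hlt : finrank ℝ (E ⧸ V) < d := by
          have := Submodule.finrank_quotient_add_finrank V
          omega
        rcases IH (finrank ℝ (E ⧸ V)) (by omega) (E ⧸ V) rfl H' with h1 | ⟨F', hF0, hFint⟩
        · exact absurd h1 hd'
        · right
          refine ⟨F'.comp π, ?_, ?_⟩
          · intro hc
            refine hF0 (LinearMap.ext fun q => ?_)
            obtain ⟨z, rfl⟩ := V.mkQ_surjective q
            exact LinearMap.congr_fun hc z
          · intro x hx
            exact hFint (π x) ⟨x, hx, rfl⟩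
    · push_neg at hline
      obtain ⟨ε, hε, hsep⟩ := sep_of_no_line K H.isClosed_topologicalClosure
        (fun u hu0 hK => by
          obtain ⟨t, ht⟩ := hline u hu0
          exact ht (hK t))
      right
      set L : Submodule ℤ E := AddSubgroup.toIntSubmodule K with hL_def
      haveI : DiscreteTopology L := by
        apply DiscreteTopology.of_forall_le_norm hε
        rintro ⟨x, hx⟩ hx0
        by_contra hlt
        push_neg at hlt
        exact hx0 (Subtype.ext (hsep x hx hlt))
      by_cases hspan : Submodule.span ℝ (L : Set E) = ⊤
      · haveI : IsZLattice ℝ L := ⟨hspan⟩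
        set b := Module.Free.chooseBasis ℤ L with hb_def
        haveI : Nonempty (Module.Free.ChooseBasisIndex ℤ L) := by
          rw [← Fintype.card_pos_iff, ← Module.finrank_eq_card_chooseBasisIndex,
            ZLattice.rank ℝ L]
          exact Module.finrank_pos
        set i₀ := Classical.arbitrary (Module.Free.ChooseBasisIndex ℤ L)
        set c := b.ofZLatticeBasis ℝ L with hc_def
        refine ⟨c.coord i₀, ?_, ?_⟩
        · intro hc
          have h1 : c.coord i₀ (c i₀) = 1 := by simp
          rw [hc] at h1
          simp at h1
        · intro x hx
          have hxK : x ∈ K := H.le_topologicalClosure hx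
          refine ⟨b.repr ⟨x, hxK⟩ i₀, ?_⟩
          have h2 := b.ofZLatticeBasis_repr_apply ℝ L ⟨x, hxK⟩ i₀
          rw [Basis.coord_apply, ← hc_def] at *
          exact h2
      · obtain ⟨f, hf0, hfbot⟩ :=
          Submodule.exists_dual_map_eq_bot_of_lt_top (lt_top_iff_ne_top.mpr hspan) inferInstance
        refine ⟨f, hf0, fun x hx => ⟨0, ?_⟩⟩
        have hxL : x ∈ Submodule.span ℝ (L : Set E) :=
          Submodule.subset_span (H.le_topologicalClosure hx)
        have hmem : f x ∈ (Submodule.span ℝ (L : Set E)).map f := ⟨x, hxL, rfl⟩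
        rw [hfbot] at hmem
        simpa using hmem

theorem dense_or_integer_functional (n : ℕ) (H : AddSubgroup (Fin n → ℝ)) :
    Dense (H : Set (Fin n → ℝ)) ∨
      ∃ F : (Fin n → ℝ) →ₗ[ℝ] ℝ, Function.Surjective F ∧ ∀ x ∈ H, ∃ m : ℤ, F x = m := by
  rcases dense_or_functional_aux (finrank ℝ (Fin n → ℝ)) (Fin n → ℝ) rfl H with h | ⟨F, hF0, hFint⟩
  · exact Or.inl h
  · right
    refine ⟨F, ?_, hFint⟩
    obtain ⟨x, hx⟩ : ∃ x, F x ≠ 0 := by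
      by_contra hc
      push_neg at hc
      exact hF0 (LinearMap.ext fun y => by simpa using hc y)
    intro c
    refine ⟨(c / F x) • x, ?_⟩
    rw [map_smul, smul_eq_mul, div_mul_cancel₀ _ hx]
end

section
/- Let G be a topological group which is nilpotent, and let H be a subgroup of G. Suppose H·G^[2] is dense in G, where G^[2] is the closure of the commutator subgroup. If for each k, G^[k+1] denotes the closure of the subgroup generated by commutators [G, G^[k]] (with G^[1] = G), and G^[m] = {e} for some m, then H is dense in G. -/
open Pointwise

/-- The closed descending central series of a topological group:
`closedLCS G 0 = G` (corresponding to `G^[1]`) and `closedLCS G (k+1)` is the closure of the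
subgroup generated by commutators of `G` with `closedLCS G k`. -/
def closedLCS (G : Type*) [Group G] [TopologicalSpace G] [IsTopologicalGroup G] : ℕ → Subgroup G
  | 0 => ⊤
  | k + 1 => (⁅(⊤ : Subgroup G), closedLCS G k⁆).topologicalClosure

open scoped commutatorElement

section Aux

variable {G : Type*} [Group G] [TopologicalSpace G] [IsTopologicalGroup G]

lemma isClosed_closedLCS (k : ℕ) : IsClosed (closedLCS G k : Set G) := by
  cases k with
  | zero => simp only [closedLCS, Subgroup.coe_top]; exact isClosed_univ
  | succ k => exact Subgroup.isClosed_topologicalClosure _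

instance closedLCS_normal (k : ℕ) : (closedLCS G k).Normal := by
  induction k with
  | zero => exact ⟨fun n _ g => trivial⟩
  | succ k ih => exact Subgroup.is_normal_topologicalClosure _

lemma continuous_commutatorElement :
    Continuous (fun p : G × G => ⁅p.1, p.2⁆) := by
  simp only [commutatorElement_def]
  fun_prop

/-- Commutator with a topological closure lands in the closure of the commutator. -/
lemma commutator_topologicalClosure_le (K M : Subgroup G) :
    ⁅K, M.topologicalClosure⁆ ≤ ⁅K, M⁆.topologicalClosure := by
  rw [Subgroup.commutator_le]
  intro g hg x hx
  have hmaps : Set.MapsTo (fun y : G => ⁅g, y⁆) (M : Set G)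
      (⁅K, M⁆.topologicalClosure : Set G) := fun y hy =>
    Subgroup.le_topologicalClosure _ (Subgroup.commutator_mem_commutator hg hy)
  have hc : Continuous fun y : G => ⁅g, y⁆ := by
    simp only [commutatorElement_def]; fun_prop
  have := hmaps.closure hc
  have hx' : x ∈ closure (M : Set G) := hx
  have hmem := this hx'
  rwa [(Subgroup.isClosed_topologicalClosure ⁅K, M⁆).closure_eq] at hmem

lemma map_topologicalClosure_le {G' : Type*} [Group G'] [TopologicalSpace G']
    [IsTopologicalGroup G'] (f : G →* G') (hf : Continuous f) (S : Subgroup G) :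
    S.topologicalClosure.map f ≤ (S.map f).topologicalClosure := by
  rintro _ ⟨x, hx, rfl⟩
  have hmaps : Set.MapsTo f (S : Set G) ((S.map f).topologicalClosure : Set G') := fun y hy =>
    Subgroup.le_topologicalClosure _ ⟨y, hy, rfl⟩
  have := hmaps.closure hf
  have hx' : x ∈ closure (S : Set G) := hx
  have hmem := this hx'
  rwa [(Subgroup.isClosed_topologicalClosure (S.map f)).closure_eq] at hmem

lemma map_closedLCS_le {G' : Type*} [Group G'] [TopologicalSpace G']
    [IsTopologicalGroup G'] (f : G →* G') (hf : Continuous f) (k : ℕ) :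
    (closedLCS G k).map f ≤ closedLCS G' k := by
  induction k with
  | zero => exact le_top
  | succ k ih =>
      refine le_trans (map_topologicalClosure_le f hf _) ?_
      refine Subgroup.topologicalClosure_minimal _ ?_ (isClosed_closedLCS _)
      rw [Subgroup.map_commutator]
      refine le_trans (Subgroup.commutator_mono le_top ih)
        (Subgroup.le_topologicalClosure _)

lemma closedLCS_le_closure_map {G' : Type*} [Group G'] [TopologicalSpace G']
    [IsTopologicalGroup G'] (f : G →* G') (hf : Continuous f)
    (hsurj : Function.Surjective f) (k : ℕ) :
    closedLCS G' k ≤ ((closedLCS G k).map f).topologicalClosure := by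
  induction k with
  | zero =>
      intro x _
      exact Subgroup.le_topologicalClosure _
        (by rw [show (closedLCS G 0) = ⊤ from rfl, Subgroup.map_top_of_surjective f hsurj]
            trivial)
  | succ k ih =>
      show (⁅(⊤ : Subgroup G'), closedLCS G' k⁆).topologicalClosure ≤ _
      refine Subgroup.topologicalClosure_minimal _ ?_
        (Subgroup.isClosed_topologicalClosure _)
      have h1 : ⁅(⊤ : Subgroup G'), closedLCS G' k⁆ ≤
          ⁅(⊤ : Subgroup G'), ((closedLCS G k).map f).topologicalClosure⁆ :=
        Subgroup.commutator_mono le_rfl ih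
      refine h1.trans ((commutator_topologicalClosure_le _ _).trans ?_)
      refine Subgroup.topologicalClosure_minimal _ ?_
        (Subgroup.isClosed_topologicalClosure _)
      rw [← Subgroup.map_top_of_surjective f hsurj, ← Subgroup.map_commutator]
      exact le_trans (Subgroup.map_mono (Subgroup.le_topologicalClosure _))
        (Subgroup.le_topologicalClosure _)

/-- If `Z` is central, `H·Z` is dense and `H·(closure of [G,G])` is dense, then `H` is dense. -/
lemma dense_of_central (H Z : Subgroup G)
    (hZ : ∀ z ∈ Z, ∀ g : G, ⁅g, z⁆ = 1)
    (hdz : Dense ((H : Set G) * (Z : Set G)))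
    (hd : Dense ((H : Set G) * (closedLCS G 1 : Set G))) :
    Dense (H : Set G) := by
  set D := H.topologicalClosure with hD
  have hZcomm : ∀ z ∈ Z, ∀ g : G, z * g = g * z := by
    intro z hz g
    have := hZ z hz g
    rw [commutatorElement_eq_one_iff_mul_comm] at this
    exact this.symm
  have hcomm : ∀ g₁ g₂ : G, ⁅g₁, g₂⁆ ∈ D := by
    intro g₁ g₂
    have hmaps : Set.MapsTo (fun p : G × G => ⁅p.1, p.2⁆)
        (((H : Set G) * (Z : Set G)) ×ˢ ((H : Set G) * (Z : Set G))) (D : Set G) := by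
      rintro ⟨a, b⟩ ⟨⟨h₁, hh₁, z₁, hz₁, rfl⟩, h₂, hh₂, z₂, hz₂, rfl⟩
      have key : ⁅h₁ * z₁, h₂ * z₂⁆ = ⁅h₁, h₂⁆ := by
        simp only [commutatorElement_def, mul_inv_rev]
        have c1 := hZcomm z₁ hz₁
        have c2 := hZcomm z₂ hz₂
        calc h₁ * z₁ * (h₂ * z₂) * (z₁⁻¹ * h₁⁻¹) * (z₂⁻¹ * h₂⁻¹)
            = h₁ * (z₁ * (h₂ * (z₂ * z₁⁻¹) * h₁⁻¹ * z₂⁻¹)) * h₂⁻¹ := by group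
          _ = h₁ * ((h₂ * (z₂ * z₁⁻¹) * h₁⁻¹ * z₂⁻¹) * z₁) * h₂⁻¹ := by rw [c1]
          _ = h₁ * (h₂ * (z₂ * (z₁⁻¹ * h₁⁻¹ * z₂⁻¹ * z₁))) * h₂⁻¹ := by group
          _ = h₁ * (h₂ * ((z₁⁻¹ * h₁⁻¹ * z₂⁻¹ * z₁) * z₂)) * h₂⁻¹ := by rw [c2]
          _ = h₁ * h₂ * z₁⁻¹ * (h₁⁻¹ * (z₂⁻¹ * (z₁ * z₂))) * h₂⁻¹ := by group
          _ = h₁ * h₂ * z₁⁻¹ * ((z₂⁻¹ * (z₁ * z₂)) * h₁⁻¹) * h₂⁻¹ := by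
              rw [hZcomm _ (mul_mem (inv_mem hz₂) (mul_mem hz₁ hz₂)) h₁⁻¹]
          _ = h₁ * h₂ * (z₁⁻¹ * (z₂⁻¹ * (z₁ * z₂))) * h₁⁻¹ * h₂⁻¹ := by group
          _ = h₁ * h₂ * (z₁⁻¹ * (z₂⁻¹ * (z₂ * z₁))) * h₁⁻¹ * h₂⁻¹ := by rw [c1]
          _ = h₁ * h₂ * h₁⁻¹ * h₂⁻¹ := by group
      show ⁅h₁ * z₁, h₂ * z₂⁆ ∈ (D : Set G)
      rw [key]
      have : ⁅h₁, h₂⁆ ∈ H := by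
        simp only [commutatorElement_def]
        exact mul_mem (mul_mem (mul_mem hh₁ hh₂) (inv_mem hh₁)) (inv_mem hh₂)
      exact Subgroup.le_topologicalClosure H this
    have hcl := hmaps.closure continuous_commutatorElement
    have hpt : (g₁, g₂) ∈ closure ((((H : Set G) * (Z : Set G)) ×ˢ
        ((H : Set G) * (Z : Set G))) : Set (G × G)) := by
      rw [closure_prod_eq]
      exact ⟨hdz _, hdz _⟩
    have := hcl hpt
    rwa [(Subgroup.isClosed_topologicalClosure H).closure_eq] at this
  have hle : closedLCS G 1 ≤ D := by
    refine Subgroup.topologicalClosure_minimal _ ?_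
      (Subgroup.isClosed_topologicalClosure H)
    rw [Subgroup.commutator_le]
    intro g₁ _ g₂ _
    exact hcomm g₁ g₂
  have hsub : (H : Set G) * (closedLCS G 1 : Set G) ⊆ (D : Set G) := by
    rintro _ ⟨a, ha, b, hb, rfl⟩
    exact mul_mem (Subgroup.le_topologicalClosure H ha) (hle hb)
  have hDdense : Dense (D : Set G) := hd.mono hsub
  have : (D : Set G) = Set.univ := by
    rw [← (Subgroup.isClosed_topologicalClosure H).closure_eq]
    exact hDdense.closure_eq
  rw [dense_iff_closure_eq, ← Subgroup.topologicalClosure_coe]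
  exact this

end Aux

universe u

theorem dense_of_closedLCS_eq_bot :
    ∀ (m : ℕ) (G : Type u) [Group G] [TopologicalSpace G] [IsTopologicalGroup G],
      closedLCS G m = ⊥ → ∀ H : Subgroup G,
      Dense ((H : Set G) * (closedLCS G 1 : Set G)) → Dense (H : Set G) := by
  intro m
  induction m with
  | zero =>
      intro G _ _ _ hm H _
      have hm' : (⊤ : Subgroup G) = ⊥ := hm
      have huniv : (H : Set G) = Set.univ := by
        ext x
        simp only [Set.mem_univ, iff_true, SetLike.mem_coe]
        have hx : x ∈ (⊥ : Subgroup G) := hm' ▸ Subgroup.mem_top x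
        rw [Subgroup.mem_bot] at hx
        rw [hx]
        exact H.one_mem
      rw [huniv]
      exact dense_univ
  | succ m ih =>
      intro G _ _ _ hm H hd
      set Z := closedLCS G m with hZdef
      haveI hZn : Z.Normal := closedLCS_normal m
      haveI hZc : IsClosed (Z : Set G) := isClosed_closedLCS m
      set π := QuotientGroup.mk' Z with hπdef
      have hπc : Continuous π := continuous_quotient_mk'
      have hπs : Function.Surjective π := QuotientGroup.mk'_surjective Z
      have hcent : ∀ z ∈ Z, ∀ g : G, ⁅g, z⁆ = 1 := by
        intro z hz g
        have h1 : ⁅g, z⁆ ∈ ⁅(⊤ : Subgroup G), Z⁆ :=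
          Subgroup.commutator_mem_commutator trivial hz
        have h2 : ⁅g, z⁆ ∈ closedLCS G (m + 1) := Subgroup.le_topologicalClosure _ h1
        rw [hm] at h2
        exact Subgroup.mem_bot.mp h2
      have hQ : closedLCS (G ⧸ Z) m = ⊥ := by
        have h1 := closedLCS_le_closure_map π hπc hπs m
        have h2 : (closedLCS G m).map π = ⊥ :=
          (Subgroup.map_eq_bot_iff _).mpr (by rw [QuotientGroup.ker_mk'])
        rw [h2] at h1
        have h3 : (⊥ : Subgroup (G ⧸ Z)).topologicalClosure = ⊥ := by
          refine le_bot_iff.mp (Subgroup.topologicalClosure_minimal _ le_rfl ?_)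
          rw [Subgroup.coe_bot]
          exact isClosed_singleton
        rw [h3] at h1
        exact le_bot_iff.mp h1
      have himg : Dense (π '' ((H : Set G) * (closedLCS G 1 : Set G))) := by
        have hsub := image_closure_subset_closure_image (s := (H : Set G) *
          (closedLCS G 1 : Set G)) hπc
        rw [hd.closure_eq, Set.image_univ, hπs.range_eq] at hsub
        rw [dense_iff_closure_eq]
        exact Set.univ_subset_iff.mp hsub
      have hdQ : Dense ((H.map π : Set (G ⧸ Z)) * (closedLCS (G ⧸ Z) 1 : Set (G ⧸ Z))) := by
        refine himg.mono ?_
        rw [Set.image_mul]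
        refine Set.mul_subset_mul ?_ ?_
        · rw [Subgroup.coe_map]
        · rw [← Subgroup.coe_map]
          exact SetLike.coe_subset_coe.mpr (map_closedLCS_le π hπc 1)
      have hdenseQ : Dense ((H.map π : Set (G ⧸ Z))) := ih (G ⧸ Z) hQ (H.map π) hdQ
      have hpre : Dense (π ⁻¹' ((H.map π : Set (G ⧸ Z)))) :=
        QuotientGroup.dense_preimage_mk.mpr hdenseQ
      have hset : π ⁻¹' ((H.map π : Set (G ⧸ Z))) = (H : Set G) * (Z : Set G) := by
        have e1 : π ⁻¹' ((H.map π : Set (G ⧸ Z))) = (((H.map π).comap π : Subgroup G) : Set G) :=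
          rfl
        rw [e1, Subgroup.comap_map_eq, QuotientGroup.ker_mk', Subgroup.mul_normal]
      exact dense_of_central H Z hcent (hset ▸ hpre) hd

theorem dense_of_dense_mod_closed_commutator
    (G : Type*) [Group G] [TopologicalSpace G] [IsTopologicalGroup G]
    [Group.IsNilpotent G] (m : ℕ) (hm : closedLCS G m = ⊥)
    (H : Subgroup G)
    (hd : Dense ((H : Set G) * (closedLCS G 1 : Set G))) :
    Dense (H : Set G) :=
  dense_of_closedLCS_eq_bot m G hm H hd
end

section
/- Let G be a topological group with closed descending central series G^[1] = G, G^[k+1] = closure of the subgroup generated by [G, G^[k]], and let H ≤ G be a subgroup such that H·G^[2] is dense in G. Then for every k ≥ 1, the set H^[k]·G^[k+1] is dense in G^[k], where H^[k] denotes the k-th term of the descending central series of H. -/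
open Pointwise
open scoped commutatorElement

/-- The descending central series of a subgroup `H` of `G`, as subgroups of `G`:
`subgroupLCS H 0 = H` (corresponding to `H^[1]`) and
`subgroupLCS H (k+1) = ⁅H, subgroupLCS H k⁆`. -/
def subgroupLCS {G : Type*} [Group G] (H : Subgroup G) : ℕ → Subgroup G
  | 0 => H
  | k + 1 => ⁅H, subgroupLCS H k⁆

section Aux

variable {G : Type*} [Group G] [TopologicalSpace G] [IsTopologicalGroup G]

/-- Three subgroups lemma, relative version. -/
theorem three_subgroups_le {A B C N : Subgroup G} [N.Normal]
    (h1 : ⁅⁅B, C⁆, A⁆ ≤ N) (h2 : ⁅⁅C, A⁆, B⁆ ≤ N) : ⁅⁅A, B⁆, C⁆ ≤ N := by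
  let f := QuotientGroup.mk' N
  have hker : f.ker = N := QuotientGroup.ker_mk' N
  have key : ∀ X Y Z : Subgroup G, (⁅⁅X, Y⁆, Z⁆ ≤ N ↔ ⁅⁅X.map f, Y.map f⁆, Z.map f⁆ = ⊥) := by
    intro X Y Z
    rw [← Subgroup.map_commutator, ← Subgroup.map_commutator, Subgroup.map_eq_bot_iff, hker]
  rw [key]
  exact Subgroup.commutator_commutator_eq_bot_of_rotate
    ((key B C A).mp h1) ((key C A B).mp h2)

theorem closedLCS_isClosed (n : ℕ) : IsClosed ((closedLCS G n : Set G)) := by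
  cases n with
  | zero => show IsClosed ((⊤ : Subgroup G) : Set G); simp
  | succ k => exact Subgroup.isClosed_topologicalClosure _

theorem closedLCS_normal_s6 (n : ℕ) : (closedLCS G n).Normal := by
  induction n with
  | zero => exact ⟨fun n _ g => Subgroup.mem_top _⟩
  | succ k ih =>
    haveI := ih
    exact Subgroup.is_normal_topologicalClosure _

theorem continuous_comm_left (b : G) : Continuous fun a : G => ⁅a, b⁆ := by
  simp only [commutatorElement_def]
  continuity

theorem continuous_comm_right (a : G) : Continuous fun b : G => ⁅a, b⁆ := by
  simp only [commutatorElement_def]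
  continuity

/-- Commutators pass to closures when the target is a closed subgroup. -/
theorem comm_mem_of_closure {A B : Set G} {N : Subgroup G} (hNc : IsClosed (N : Set G))
    (h : ∀ a ∈ A, ∀ b ∈ B, ⁅a, b⁆ ∈ N) :
    ∀ a ∈ closure A, ∀ b ∈ closure B, ⁅a, b⁆ ∈ N := by
  have step1 : ∀ a ∈ A, ∀ b ∈ closure B, ⁅a, b⁆ ∈ N := by
    intro a ha b hb
    have : closure B ⊆ (fun b => ⁅a, b⁆) ⁻¹' (N : Set G) :=
      closure_minimal (fun b hb => h a ha b hb) (hNc.preimage (continuous_comm_right a))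
    exact this hb
  intro a ha b hb
  have : closure A ⊆ (fun a => ⁅a, b⁆) ⁻¹' (N : Set G) :=
    closure_minimal (fun a ha => step1 a ha b hb) (hNc.preimage (continuous_comm_left b))
  exact this ha

theorem closedLCS_comm (i : ℕ) :
    ∀ j : ℕ, ⁅closedLCS G i, closedLCS G j⁆ ≤ closedLCS G (i + j + 1) := by
  induction i with
  | zero =>
    intro j
    have h : 0 + j + 1 = j + 1 := by omega
    rw [h]
    show ⁅(⊤ : Subgroup G), closedLCS G j⁆ ≤ closedLCS G (j + 1)
    exact Subgroup.le_topologicalClosure _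
  | succ i ih =>
    intro j
    haveI : (closedLCS G (i + 1 + j + 1)).Normal := closedLCS_normal_s6 _
    have hcore : ⁅⁅(⊤ : Subgroup G), closedLCS G i⁆, closedLCS G j⁆ ≤
        closedLCS G (i + 1 + j + 1) := by
      apply three_subgroups_le
      · -- ⁅⁅closedLCS i, closedLCS j⁆, ⊤⁆ ≤ _
        have h1 : ⁅closedLCS G i, closedLCS G j⁆ ≤ closedLCS G (i + j + 1) := ih j
        calc ⁅⁅closedLCS G i, closedLCS G j⁆, (⊤ : Subgroup G)⁆
            ≤ ⁅(⊤ : Subgroup G), closedLCS G (i + j + 1)⁆ := by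
              rw [Subgroup.commutator_comm]
              exact Subgroup.commutator_mono le_rfl h1
          _ ≤ closedLCS G (i + j + 1 + 1) := Subgroup.le_topologicalClosure _
          _ = closedLCS G (i + 1 + j + 1) := by ring_nf
      · -- ⁅⁅closedLCS j, ⊤⁆, closedLCS i⁆ ≤ _
        have h2 : ⁅closedLCS G j, (⊤ : Subgroup G)⁆ ≤ closedLCS G (j + 1) := by
          rw [Subgroup.commutator_comm]
          exact Subgroup.le_topologicalClosure _
        calc ⁅⁅closedLCS G j, (⊤ : Subgroup G)⁆, closedLCS G i⁆
            ≤ ⁅closedLCS G i, closedLCS G (j + 1)⁆ := by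
              rw [Subgroup.commutator_comm]
              exact Subgroup.commutator_mono le_rfl h2
          _ ≤ closedLCS G (i + (j + 1) + 1) := ih (j + 1)
          _ = closedLCS G (i + 1 + j + 1) := by ring_nf
    rw [Subgroup.commutator_le]
    intro a ha b hb
    have ha' : a ∈ closure ((⁅(⊤ : Subgroup G), closedLCS G i⁆ : Subgroup G) : Set G) := by
      have : a ∈ (⁅(⊤ : Subgroup G), closedLCS G i⁆).topologicalClosure := ha
      rwa [← Subgroup.topologicalClosure_coe]
    exact comm_mem_of_closure (closedLCS_isClosed _)
      (fun x hx y hy => (Subgroup.commutator_le.mp hcore) x hx y hy)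
      a ha' b (subset_closure hb)

theorem subgroupLCS_le_closedLCS (H : Subgroup G) :
    ∀ k : ℕ, subgroupLCS H k ≤ closedLCS G k := by
  intro k
  induction k with
  | zero => exact le_top
  | succ k ih =>
    show ⁅H, subgroupLCS H k⁆ ≤ closedLCS G (k + 1)
    calc ⁅H, subgroupLCS H k⁆ ≤ ⁅(⊤ : Subgroup G), closedLCS G k⁆ :=
          Subgroup.commutator_mono le_top ih
      _ ≤ closedLCS G (k + 1) := Subgroup.le_topologicalClosure _

end Aux

theorem lcs_term_dense (G : Type*) [Group G] [TopologicalSpace G] [IsTopologicalGroup G]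
    (H : Subgroup G)
    (hd : Dense ((H : Set G) * (closedLCS G 1 : Set G))) :
    ∀ k : ℕ, (closedLCS G k : Set G) ⊆
      closure ((subgroupLCS H k : Set G) * (closedLCS G (k + 1) : Set G)) := by
  intro k
  induction k with
  | zero =>
    show (closedLCS G 0 : Set G) ⊆ closure ((H : Set G) * (closedLCS G 1 : Set G))
    rw [hd.closure_eq]
    exact Set.subset_univ _
  | succ k ih =>
    haveI hN : (closedLCS G (k + 2)).Normal := closedLCS_normal_s6 _
    -- the target is the closure of a subgroup
    set K := (subgroupLCS H (k + 1) ⊔ closedLCS G (k + 2)).topologicalClosure with hK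
    have hcoe : closure ((subgroupLCS H (k + 1) : Set G) * (closedLCS G (k + 2) : Set G))
        = (K : Set G) := by
      rw [← Subgroup.mul_normal, Subgroup.topologicalClosure_coe]
    intro x hx
    rw [hcoe]
    -- suffices subgroup inequality
    have hle : closedLCS G (k + 1) ≤ K := by
      apply Subgroup.topologicalClosure_minimal _ _ (Subgroup.isClosed_topologicalClosure _)
      rw [Subgroup.commutator_le]
      intro g _ y hy
      -- g lies in the closure of S, y in closure of T
      set S := (H : Set G) * (closedLCS G 1 : Set G) with hS
      set T := (subgroupLCS H k : Set G) * (closedLCS G (k + 1) : Set G) with hT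
      have hg : g ∈ closure S := by rw [hd.closure_eq]; trivial
      have hy' : y ∈ closure T := ih hy
      -- elementwise computation
      have helem : ∀ s ∈ S, ∀ t ∈ T,
          ⁅s, t⁆ ∈ subgroupLCS H (k + 1) ⊔ closedLCS G (k + 2) := by
        rintro s ⟨h1, hh1, z, hz, rfl⟩ t ⟨a, ha, b, hb, rfl⟩
        have e : ⁅h1 * z, a * b⁆ =
            (h1 * ⁅z, a⁆ * h1⁻¹) * ⁅h1, a⁆ * (a * ⁅h1 * z, b⁆ * a⁻¹) := by
          simp only [commutatorElement_def]
          group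
        rw [e]
        have m1 : h1 * ⁅z, a⁆ * h1⁻¹ ∈ closedLCS G (k + 2) := by
          have hza : ⁅z, a⁆ ∈ closedLCS G (1 + k + 1) :=
            Subgroup.commutator_le.mp (closedLCS_comm 1 k) z hz a
              (subgroupLCS_le_closedLCS H k ha)
          have : (1 + k + 1) = k + 2 := by omega
          rw [this] at hza
          exact hN.conj_mem _ hza h1
        have m2 : ⁅h1, a⁆ ∈ subgroupLCS H (k + 1) :=
          Subgroup.commutator_mem_commutator hh1 ha
        have m3 : a * ⁅h1 * z, b⁆ * a⁻¹ ∈ closedLCS G (k + 2) := by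
          have hzb : ⁅h1 * z, b⁆ ∈ closedLCS G (k + 2) :=
            Subgroup.le_topologicalClosure _
              (Subgroup.commutator_mem_commutator (Subgroup.mem_top _) hb)
          exact hN.conj_mem _ hzb a
        exact mul_mem (mul_mem (Subgroup.mem_sup_right m1) (Subgroup.mem_sup_left m2))
          (Subgroup.mem_sup_right m3)
      -- continuity of the commutator map
      have hf : Continuous fun p : G × G => ⁅p.1, p.2⁆ := by
        simp only [commutatorElement_def]
        continuity
      have hmem : (g, y) ∈ closure (S ×ˢ T) := by
        rw [closure_prod_eq]
        exact ⟨hg, hy'⟩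
      have himg : ⁅g, y⁆ ∈ closure ((fun p : G × G => ⁅p.1, p.2⁆) '' (S ×ˢ T)) :=
        image_closure_subset_closure_image hf ⟨(g, y), hmem, rfl⟩
      have hsub : closure ((fun p : G × G => ⁅p.1, p.2⁆) '' (S ×ˢ T)) ⊆ (K : Set G) := by
        apply closure_minimal _ (Subgroup.isClosed_topologicalClosure _)
        rintro _ ⟨⟨s, t⟩, ⟨hs, ht⟩, rfl⟩
        exact Subgroup.le_topologicalClosure _ (helem s hs t ht)
      exact hsub himg
    exact hle hx
end

section
/- Let G be a connected nilpotent Lie group with commutator subgroup G' (closure taken), and let τ : G → G/G' be the quotient map onto the abelianization. If Γ ≤ G is a subgroup such that τ(Γ) is dense in G/G', then Γ is dense in G. -/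
open scoped Manifold
open Pointwise
open scoped commutatorElement

section Aux

variable {G : Type} [Group G] [TopologicalSpace G] [IsTopologicalGroup G]

/-- If the topological closure of a subgroup is dense, the subgroup is dense. -/
lemma dense_of_dense_topologicalClosure {H : Subgroup G}
    (h : Dense (H.topologicalClosure : Set G)) : Dense (H : Set G) := by
  rwa [Subgroup.topologicalClosure_coe, dense_closure] at h

/-- Commutator is unchanged by a central factor on the left argument. -/
lemma commutator_mul_central_left {z u c : G} (hz : ∀ g : G, z * g = g * z) :
    ⁅u * z, c⁆ = ⁅u, c⁆ := by
  have h1 : z * c * z⁻¹ = c := by rw [hz c]; group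
  rw [commutatorElement_def, commutatorElement_def, mul_inv_rev]
  have h2 : u * z * c * (z⁻¹ * u⁻¹) * c⁻¹ = u * (z * c * z⁻¹) * u⁻¹ * c⁻¹ := by group
  rw [h2, h1]

/-- Commutator is unchanged by a central factor on the right argument. -/
lemma commutator_mul_central_right {w c v : G} (hw : ∀ g : G, w * g = g * w) :
    ⁅c, v * w⁆ = ⁅c, v⁆ := by
  rw [← commutatorElement_inv, commutator_mul_central_left hw, commutatorElement_inv]

/-- Key algebraic lemma: commutators are unchanged modulo the next term of the
lower central series when the arguments are perturbed by elements of (⊤ : Subgroup G).lowerCentralSeries k. -/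
lemma commutator_mul_mem {k : ℕ} {Γ : Subgroup G} {a b x y : G}
    (ha : a ∈ Γ) (hb : b ∈ Γ)
    (hx : x ∈ (⊤ : Subgroup G).lowerCentralSeries k) (hy : y ∈ (⊤ : Subgroup G).lowerCentralSeries k) :
    ⁅a * x, b * y⁆ ∈ Γ ⊔ (⊤ : Subgroup G).lowerCentralSeries (k + 1) := by
  set N := (⊤ : Subgroup G).lowerCentralSeries (k + 1) with hN
  have hNnormal : N.Normal := Subgroup.lowerCentralSeries_normal ⊤ (k + 1)
  set π : G →* G ⧸ N := QuotientGroup.mk' N with hπ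
  have hcentral : ∀ z ∈ (⊤ : Subgroup G).lowerCentralSeries k, ∀ g : G ⧸ N, π z * g = g * π z := by
    intro z hz g
    obtain ⟨g, rfl⟩ := QuotientGroup.mk'_surjective N g
    have hmem : ⁅z, g⁆ ∈ N := by
      rw [hN, Subgroup.lowerCentralSeries_succ]
      exact Subgroup.commutator_mem_commutator hz (Subgroup.mem_top g)
    have h1 : π ⁅z, g⁆ = 1 := (QuotientGroup.eq_one_iff _).2 hmem
    have h2 : ⁅π z, π g⁆ = 1 := by rw [← map_commutatorElement]; exact h1
    exact (commutatorElement_eq_one_iff_commute.1 h2).eq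
  have key : π ⁅a * x, b * y⁆ = π ⁅a, b⁆ := by
    rw [map_commutatorElement, map_commutatorElement, map_mul, map_mul]
    rw [commutator_mul_central_left (hcentral x hx),
      commutator_mul_central_right (hcentral y hy)]
  have hmemN : ⁅a * x, b * y⁆⁻¹ * ⁅a, b⁆ ∈ N := by
    rw [← QuotientGroup.eq]
    exact key
  have hw : ⁅a * x, b * y⁆ = ⁅a, b⁆ * (⁅a * x, b * y⁆⁻¹ * ⁅a, b⁆)⁻¹ := by group
  rw [hw]
  have hab : ⁅a, b⁆ ∈ Γ := by
    rw [commutatorElement_def]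
    exact mul_mem (mul_mem (mul_mem ha hb) (inv_mem ha)) (inv_mem hb)
  exact mul_mem (Subgroup.mem_sup_left hab) (inv_mem (Subgroup.mem_sup_right hmemN))

end Aux

theorem dense_of_dense_in_abelianization
    (n : ℕ) (G : Type) [Group G] [TopologicalSpace G]
    [ChartedSpace (EuclideanSpace ℝ (Fin n)) G]
    [LieGroup (𝓘(ℝ, EuclideanSpace ℝ (Fin n))) (⊤ : ℕ∞) G] [IsTopologicalGroup G]
    [ConnectedSpace G] [Group.IsNilpotent G]
    (Γ : Subgroup G)
    (hd : Dense ((QuotientGroup.mk : G → G ⧸ (commutator G).topologicalClosure) ''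
      (Γ : Set G))) :
    Dense (Γ : Set G) := by
  -- D k = Γ ⊔ (k-th term of lower central series)
  set D : ℕ → Subgroup G := fun k => Γ ⊔ (⊤ : Subgroup G).lowerCentralSeries k with hD
  -- Base case: D 1 is dense.
  have base : Dense (D 1 : Set G) := by
    apply dense_of_dense_topologicalClosure
    set N := (commutator G).topologicalClosure with hN
    have h1 : Dense ((QuotientGroup.mk : G → G ⧸ N) ⁻¹'
        ((QuotientGroup.mk : G → G ⧸ N) '' (Γ : Set G))) :=
      hd.preimage (QuotientGroup.isOpenMap_coe)
    rw [QuotientGroup.preimage_image_coe] at h1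
    refine h1.mono ?_
    rintro x ⟨m, hm, g, hg, rfl⟩
    refine mul_mem ?_ ?_
    · -- m ∈ N = closure of commutator ⊆ closure of D 1
      have : (N : Set G) ⊆ ((D 1).topologicalClosure : Set G) := by
        rw [Subgroup.topologicalClosure_coe, Subgroup.topologicalClosure_coe]
        apply closure_mono
        intro z hz
        exact Subgroup.mem_sup_right (by rwa [Subgroup.top_lowerCentralSeries_one])
      exact this hm
    · exact (D 1).le_topologicalClosure (Subgroup.mem_sup_left hg)
  -- Inductive step: if D k (k ≥ 1) is dense then D (k+1) is dense.
  have step : ∀ k, 1 ≤ k → Dense (D k : Set G) → Dense (D (k + 1) : Set G) := by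
    intro k _ hk
    apply dense_of_dense_topologicalClosure
    set C := (D (k + 1)).topologicalClosure with hC
    -- every commutator ⁅g, h⁆ belongs to C
    have hcomm : ∀ g h : G, ⁅g, h⁆ ∈ C := by
      intro g h
      have hf : Continuous (fun p : G × G => ⁅p.1, p.2⁆) := by
        simp only [commutatorElement_def]
        fun_prop
      have hgh : (g, h) ∈ closure ((D k : Set G) ×ˢ (D k : Set G)) := by
        rw [closure_prod_eq]
        exact ⟨hk.closure_eq ▸ trivial, hk.closure_eq ▸ trivial⟩
      have himg : (fun p : G × G => ⁅p.1, p.2⁆) '' ((D k : Set G) ×ˢ (D k : Set G)) ⊆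
          (D (k + 1) : Set G) := by
        rintro z ⟨⟨x, y⟩, ⟨hx, hy⟩, rfl⟩
        have hx' : x ∈ (Γ : Set G) * ((⊤ : Subgroup G).lowerCentralSeries k : Set G) := by
          rw [← Subgroup.mul_normal]; exact hx
        have hy' : y ∈ (Γ : Set G) * ((⊤ : Subgroup G).lowerCentralSeries k : Set G) := by
          rw [← Subgroup.mul_normal]; exact hy
        obtain ⟨a, ha, u, hu, rfl⟩ := hx'
        obtain ⟨b, hb, v, hv, rfl⟩ := hy'
        exact commutator_mul_mem ha hb hu hv
      have : ⁅g, h⁆ ∈ closure ((fun p : G × G => ⁅p.1, p.2⁆) ''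
          ((D k : Set G) ×ˢ (D k : Set G))) :=
        image_closure_subset_closure_image hf ⟨(g, h), hgh, rfl⟩
      have : ⁅g, h⁆ ∈ closure (D (k + 1) : Set G) :=
        closure_mono himg this
      rwa [← Subgroup.topologicalClosure_coe, SetLike.mem_coe] at this
    -- hence D k ≤ C, so C is dense
    have hDk : (D k : Set G) ⊆ (C : Set G) := by
      intro x hx
      have hx' : x ∈ (Γ : Set G) * ((⊤ : Subgroup G).lowerCentralSeries k : Set G) := by
        rw [← Subgroup.mul_normal]; exact hx
      obtain ⟨a, ha, u, hu, rfl⟩ := hx'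
      refine mul_mem ((D (k + 1)).le_topologicalClosure (Subgroup.mem_sup_left ha)) ?_
      -- u ∈ (⊤ : Subgroup G).lowerCentralSeries k ≤ (⊤ : Subgroup G).lowerCentralSeries 1 = commutator G ≤ C
      have h1 : (⊤ : Subgroup G).lowerCentralSeries k ≤ commutator G := by
        rw [← Subgroup.top_lowerCentralSeries_one]
        exact Subgroup.lowerCentralSeries_antitone ⊤ (by omega)
      have h2 : commutator G ≤ C := by
        rw [commutator_def]
        exact Subgroup.commutator_le.2 fun g _ h _ => hcomm g h
      exact h2 (h1 hu)
    exact hk.mono hDk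
  -- all D k for k ≥ 1 are dense
  have all : ∀ k, Dense (D (k + 1) : Set G) := by
    intro k
    induction k with
    | zero => exact base
    | succ m ih => exact step (m + 1) (by omega) ih
  -- nilpotency: lower central series reaches ⊥
  obtain ⟨c, hc⟩ := Subgroup.nilpotent_iff_lowerCentralSeries.1 ‹Group.IsNilpotent G›
  have hbot : (⊤ : Subgroup G).lowerCentralSeries (c + 1) = ⊥ :=
    le_bot_iff.1 (hc ▸ Subgroup.lowerCentralSeries_antitone ⊤ (Nat.le_succ c))
  have := all c
  rw [hD] at this
  simp only [hbot, sup_bot_eq] at this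
  exact this
end
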